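/- The count N(d;2,2,0) of 2×2×2 non-negative integer arrays of total sum d and weight (2,2,0) satisfies: if d ≡ 0 (mod 4) then 384 · N(d;2,2,0) = d(d+4)(d²+12d+8); if d ≡ 2 (mod 4) then (as integers) 384 · N(d;2,2,0) = (d+2)(d³+14d²+28d−24); and if d is odd then N(d;2,2,0) = 0. -/

import Mathlib

/-!
Write `d = 2 * m` (the first two conditions force `d ≡ a [MOD 2]`). The slice sums force the
`(i, k)`-marginal of `e` to be `[[u, m + 1 - u], [m - u, u - 1]]` and the `(j, k)`-marginal to be
`[[v, m + 1 - v], [m - v, v - 1]]`. Given these, each `k`-slice of `e` is a 2×2 matrix with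
prescribed margins, so it is determined by the smaller of its two off-diagonal entries: `x` for
`k = 0`, `y` for `k = 1`. The constraints on `(x, y, u, v)` say exactly that `u` and `v` both lie in
`[max x (y + 1), min (m - x) (m + 1 - y)]`, an interval of length
`w_m(x, y) = min (m + 1 - 2x) (m + 1 - 2y) (m - x - y)`. Hence `N (2m) = ∑ w_m(x, y)²`, and since
`w_{m+2}(x + 1, y + 1) = w_m(x, y)` this sum grows by `(m + 2)² + 2 ∑ₓ (m + 1 - 2x)²` from `m` to
`m + 2`; two-step induction gives `24 N (2m) = m⁴ + 8m³ + 14m² + 4m - 3 [m odd]`.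
-/

open Finset

/-- `N d a b c` is the number of 2×2×2 arrays of non-negative integers with total
sum `d` whose slice sums in the three directions differ by `a`, `b`, `c`
respectively; it is the dimension of the weight space `W(d;a,b,c)`. -/
noncomputable def N (d a b c : ℕ) : ℕ :=
  Set.ncard {e : Fin 2 × Fin 2 × Fin 2 → ℕ |
    (∑ i : Fin 2, ∑ j : Fin 2, ∑ k : Fin 2, e (i, j, k)) = d ∧
    (∑ j : Fin 2, ∑ k : Fin 2, e (0, j, k)) = (∑ j : Fin 2, ∑ k : Fin 2, e (1, j, k)) + a ∧
    (∑ i : Fin 2, ∑ k : Fin 2, e (i, 0, k)) = (∑ i : Fin 2, ∑ k : Fin 2, e (i, 1, k)) + b ∧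
    (∑ i : Fin 2, ∑ j : Fin 2, e (i, j, 0)) = (∑ i : Fin 2, ∑ j : Fin 2, e (i, j, 1)) + c}

def weightArrays (d a b c : ℕ) : Set (Fin 2 × Fin 2 × Fin 2 → ℕ) :=
  {e : Fin 2 × Fin 2 × Fin 2 → ℕ |
    (∑ i : Fin 2, ∑ j : Fin 2, ∑ k : Fin 2, e (i, j, k)) = d ∧
    (∑ j : Fin 2, ∑ k : Fin 2, e (0, j, k)) = (∑ j : Fin 2, ∑ k : Fin 2, e (1, j, k)) + a ∧
    (∑ i : Fin 2, ∑ k : Fin 2, e (i, 0, k)) = (∑ i : Fin 2, ∑ k : Fin 2, e (i, 1, k)) + b ∧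
    (∑ i : Fin 2, ∑ j : Fin 2, e (i, j, 0)) = (∑ i : Fin 2, ∑ j : Fin 2, e (i, j, 1)) + c}

lemma N_eq_ncard_weightArrays (d a b c : ℕ) : N d a b c = (weightArrays d a b c).ncard := rfl

lemma N_eq_zero_of_odd_add {d a b c : ℕ} (h : Odd (d + a)) : N d a b c = 0 := by
  suffices weightArrays d a b c = ∅ by rw [N_eq_ncard_weightArrays, this, Set.ncard_empty]
  refine Set.eq_empty_of_forall_notMem fun e ⟨hd, ha, _⟩ => ?_
  simp only [Fin.sum_univ_two] at hd ha
  obtain ⟨k, hk⟩ := h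
  omega

-- The 2×2 matrix with row sums `r, t - r`, column sums `c, t - c` and off-diagonal minimum `z`.
def marginSlice (r c t z : ℕ) : Fin 2 → Fin 2 → ℕ :=
  ![![min r c - z, r - (min r c - z)], ![c - (min r c - z), t - r - (c - (min r c - z))]]

lemma marginSlice_margins {r c t z : ℕ} (hr : r ≤ t) (hc : c ≤ t)
    (hz : z ≤ min (min r c) (min (t - r) (t - c))) :
    marginSlice r c t z 0 0 + marginSlice r c t z 0 1 = r ∧
      marginSlice r c t z 1 0 + marginSlice r c t z 1 1 = t - r ∧
      marginSlice r c t z 0 0 + marginSlice r c t z 1 0 = c ∧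
      marginSlice r c t z 0 1 + marginSlice r c t z 1 1 = t - c := by
  simp only [marginSlice, Matrix.cons_val_zero, Matrix.cons_val_one]
  omega

def arrayOfParams (m : ℕ) (w : Σ _ : ℕ × ℕ, ℕ × ℕ) : Fin 2 × Fin 2 × Fin 2 → ℕ
  | (i, j, 0) => marginSlice w.2.1 w.2.2 m w.1.1 i j
  | (i, j, 1) => marginSlice (m + 1 - w.2.1) (m + 1 - w.2.2) m w.1.2 i j

def paramsOfArray (e : Fin 2 × Fin 2 × Fin 2 → ℕ) : Σ _ : ℕ × ℕ, ℕ × ℕ :=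
  ⟨(min (e (0, 1, 0)) (e (1, 0, 0)), min (e (0, 1, 1)) (e (1, 0, 1))),
    (e (0, 0, 0) + e (0, 1, 0), e (0, 0, 0) + e (1, 0, 0))⟩

def marginWidth (m x y : ℕ) : ℕ := min (m + 1 - 2 * x) (min (m + 1 - 2 * y) (m - x - y))

def sumSqMarginWidth (m : ℕ) : ℕ :=
  ∑ x ∈ range (m / 2 + 1), ∑ y ∈ range (m / 2 + 1), marginWidth m x y ^ 2

def admissibleMarginals (m x y : ℕ) : Finset ℕ := Icc (max x (y + 1)) (min (m - x) (m + 1 - y))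

lemma card_admissibleMarginals (m x y : ℕ) :
    #(admissibleMarginals m x y) = marginWidth m x y := by
  simp only [admissibleMarginals, Nat.card_Icc, marginWidth]
  omega

def arrayParams (m : ℕ) : Finset (Σ _ : ℕ × ℕ, ℕ × ℕ) :=
  (range (m / 2 + 1) ×ˢ range (m / 2 + 1)).sigma fun p =>
    admissibleMarginals m p.1 p.2 ×ˢ admissibleMarginals m p.1 p.2

lemma card_arrayParams (m : ℕ) : #(arrayParams m) = sumSqMarginWidth m := by
  simp only [arrayParams, card_sigma, sum_product, card_product, card_admissibleMarginals, sq,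
    sumSqMarginWidth]

lemma mem_arrayParams {m : ℕ} {w : Σ _ : ℕ × ℕ, ℕ × ℕ} :
    w ∈ arrayParams m ↔ 2 * w.1.1 ≤ m ∧ 2 * w.1.2 ≤ m ∧
      w.1.1 ≤ w.2.1 ∧ w.1.2 + 1 ≤ w.2.1 ∧ w.2.1 + w.1.1 ≤ m ∧ w.2.1 + w.1.2 ≤ m + 1 ∧
      w.1.1 ≤ w.2.2 ∧ w.1.2 + 1 ≤ w.2.2 ∧ w.2.2 + w.1.1 ≤ m ∧ w.2.2 + w.1.2 ≤ m + 1 := by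
  simp only [arrayParams, admissibleMarginals, mem_sigma, mem_product, mem_range, mem_Icc,
    max_le_iff, le_min_iff]
  omega

lemma mem_weightArrays_two_mul {m : ℕ} {e : Fin 2 × Fin 2 × Fin 2 → ℕ} :
    e ∈ weightArrays (2 * m) 2 2 0 ↔
      e (0, 0, 0) + e (0, 0, 1) + e (0, 1, 0) + e (0, 1, 1) = m + 1 ∧
      e (1, 0, 0) + e (1, 0, 1) + e (1, 1, 0) + e (1, 1, 1) = m - 1 ∧
      e (0, 0, 0) + e (0, 0, 1) + e (1, 0, 0) + e (1, 0, 1) = m + 1 ∧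
      e (0, 0, 0) + e (1, 0, 0) + e (0, 1, 0) + e (1, 1, 0) = m ∧ 1 ≤ m := by
  simp only [weightArrays, Set.mem_ofPred_eq, Fin.sum_univ_two]
  omega

lemma arrayOfParams_mem_weightArrays {m : ℕ} {w : Σ _ : ℕ × ℕ, ℕ × ℕ}
    (hw : w ∈ arrayParams m) : arrayOfParams m w ∈ weightArrays (2 * m) 2 2 0 := by
  rw [mem_arrayParams] at hw
  obtain ⟨h00, h01, h10, h11⟩ := marginSlice_margins (t := m) (z := w.1.1) (r := w.2.1)
    (c := w.2.2) (by omega) (by omega) (by omega)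
  obtain ⟨h00', h01', h10', h11'⟩ := marginSlice_margins (t := m) (z := w.1.2)
    (r := m + 1 - w.2.1) (c := m + 1 - w.2.2) (by omega) (by omega) (by omega)
  simp only [mem_weightArrays_two_mul, arrayOfParams]
  omega

lemma paramsOfArray_mem_arrayParams {m : ℕ} {e : Fin 2 × Fin 2 × Fin 2 → ℕ}
    (he : e ∈ weightArrays (2 * m) 2 2 0) : paramsOfArray e ∈ arrayParams m := by
  rw [mem_weightArrays_two_mul] at he
  simp only [mem_arrayParams, paramsOfArray]
  omega

lemma arrayOfParams_paramsOfArray {m : ℕ} {e : Fin 2 × Fin 2 × Fin 2 → ℕ}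
    (he : e ∈ weightArrays (2 * m) 2 2 0) : arrayOfParams m (paramsOfArray e) = e := by
  rw [mem_weightArrays_two_mul] at he
  funext ⟨i, j, k⟩
  fin_cases i <;> fin_cases j <;> fin_cases k <;>
    simp only [arrayOfParams, paramsOfArray, marginSlice, Fin.zero_eta, Fin.mk_one, Fin.isValue,
      Matrix.cons_val_zero, Matrix.cons_val_one, Matrix.cons_val_fin_one] <;> omega

lemma paramsOfArray_arrayOfParams {m : ℕ} {w : Σ _ : ℕ × ℕ, ℕ × ℕ}
    (hw : w ∈ arrayParams m) : paramsOfArray (arrayOfParams m w) = w := by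
  rw [mem_arrayParams] at hw
  obtain ⟨⟨x, y⟩, u, v⟩ := w
  simp only [paramsOfArray, arrayOfParams, marginSlice, Matrix.cons_val_zero, Matrix.cons_val_one,
    Sigma.mk.injEq, Prod.mk.injEq, heq_eq_eq]
  dsimp only at hw
  omega

lemma bijOn_paramsOfArray (m : ℕ) :
    Set.BijOn paramsOfArray (weightArrays (2 * m) 2 2 0) (arrayParams m) :=
  Set.InvOn.bijOn (f' := arrayOfParams m)
    ⟨fun _ he => arrayOfParams_paramsOfArray he, fun _ hw => paramsOfArray_arrayOfParams hw⟩
    (fun _ he => paramsOfArray_mem_arrayParams he) (fun _ hw => arrayOfParams_mem_weightArrays hw)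

lemma N_two_mul (m : ℕ) : N (2 * m) 2 2 0 = sumSqMarginWidth m := by
  rw [N_eq_ncard_weightArrays, (bijOn_paramsOfArray m).ncard_eq, Set.ncard_coe_finset,
    card_arrayParams]

lemma six_mul_sum_sq_sub_two_mul (n : ℕ) :
    6 * ∑ x ∈ range (n / 2 + 1), (n + 1 - 2 * x) ^ 2 = (n + 1) * (n + 2) * (n + 3) := by
  induction n using Nat.twoStepInduction with
  | zero => simp
  | one => simp
  | more n ih _ =>
    have hshift : ∀ x, n + 2 + 1 - 2 * (x + 1) = n + 1 - 2 * x := fun x => by omega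
    rw [show (n + 2) / 2 + 1 = n / 2 + 1 + 1 by omega, sum_range_succ', mul_add]
    simp only [hshift, ih, mul_zero, Nat.sub_zero]
    ring

lemma marginWidth_add_two (m x y : ℕ) :
    marginWidth (m + 2) (x + 1) (y + 1) = marginWidth m x y := by
  unfold marginWidth
  omega

lemma sumSqMarginWidth_add_two (m : ℕ) :
    sumSqMarginWidth (m + 2) = sumSqMarginWidth m + (m + 2) ^ 2 +
      2 * ∑ x ∈ range (m / 2 + 1), (m + 1 - 2 * x) ^ 2 := by
  have hrow : ∀ x, marginWidth (m + 2) (x + 1) 0 = m + 1 - 2 * x := fun x => by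
    unfold marginWidth; omega
  have hcol : ∀ y, marginWidth (m + 2) 0 (y + 1) = m + 1 - 2 * y := fun y => by
    unfold marginWidth; omega
  have hcorner : marginWidth (m + 2) 0 0 = m + 2 := by unfold marginWidth; omega
  simp only [sumSqMarginWidth, show (m + 2) / 2 + 1 = m / 2 + 1 + 1 by omega, sum_range_succ',
    marginWidth_add_two, hrow, hcol, hcorner, sum_add_distrib]
  ring

lemma sumSqMarginWidth_closed_form (m : ℕ) :
    24 * sumSqMarginWidth m + 3 * (m % 2) = m ^ 4 + 8 * m ^ 3 + 14 * m ^ 2 + 4 * m := by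
  induction m using Nat.twoStepInduction with
  | zero => decide
  | one => decide
  | more m ih _ =>
    have hsq := six_mul_sum_sq_sub_two_mul m
    rw [sumSqMarginWidth_add_two, Nat.add_mod_right]
    linear_combination ih + 8 * hsq

/-- Dimension formulas for the weight space `W(d;2,2,0)`. -/
theorem dim_weight_space_220 (d : ℕ) :
    (d % 4 = 0 → 384 * N d 2 2 0 = d * (d + 4) * (d ^ 2 + 12 * d + 8)) ∧
    (d % 4 = 2 → (384 * N d 2 2 0 : ℤ) =
      ((d : ℤ) + 2) * ((d : ℤ) ^ 3 + 14 * (d : ℤ) ^ 2 + 28 * (d : ℤ) - 24)) ∧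
    (Odd d → N d 2 2 0 = 0) := by
  refine ⟨fun hd => ?_, fun hd => ?_, fun hd => N_eq_zero_of_odd_add (hd.add_even even_two)⟩
  · obtain ⟨m, rfl, hm⟩ : ∃ m, d = 2 * m ∧ m % 2 = 0 := ⟨d / 2, by omega, by omega⟩
    have h := sumSqMarginWidth_closed_form m
    rw [hm] at h
    rw [N_two_mul]
    linear_combination 16 * h
  · obtain ⟨m, rfl, hm⟩ : ∃ m, d = 2 * m ∧ m % 2 = 1 := ⟨d / 2, by omega, by omega⟩
    have h : (24 * sumSqMarginWidth m + 3 : ℤ) = m ^ 4 + 8 * m ^ 3 + 14 * m ^ 2 + 4 * m := by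
      exact_mod_cast hm ▸ sumSqMarginWidth_closed_form m
    rw [N_two_mul]
    push_cast
    linear_combination 16 * h
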